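/- arXiv:1109.2563 — 4 statements merged into one kernel-verified Lean document; each statement's English description precedes it below -/
import Mathlib

section
/- For every Boolean function f : {0,1}^n × {0,1}^n → {0,1}, the garden-hose complexity of f satisfies GH(f) ≤ 2^n + 1. -/
/-- A partial matching on the vertex type `V`, encoded by a partner function:
`m i = some j` means that there is an edge between `i` and `j`;
the graph `{ {i,j} | m i = some j }` then has maximum degree at most `1`
and no self-loops. -/
def IsPartialMatching {V : Type*} (m : V → Option V) : Prop :=
  ∀ i j, m i = some j → i ≠ j ∧ m j = some i

/-- The position of the water in a garden-hose game with `s` pipes: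
`atAlice i` (resp. `atBob i`) means the water has just arrived at Alice's
(resp. Bob's) end of pipe `i`; `exitA` / `exitB` mean the water has exited
on Alice's / Bob's side, i.e. the maximal path starting at the tap has ended
in `A∘` / in `B`. -/
inductive GHState (s : ℕ) where
  | atAlice : Fin s → GHState s
  | atBob : Fin s → GHState s
  | exitA : GHState s
  | exitB : GHState s
  deriving DecidableEq

/-- Vertex `k` of `A∘ = {0, 1, ..., s}` viewed as a pipe: vertex `0` is the water
tap (no pipe), and vertex `i + 1` is Alice's end of pipe `i`. -/
def toPipe {s : ℕ} (k : Fin (s + 1)) : Option (Fin s) :=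
  if h : (k : ℕ) = 0 then none
  else some ⟨(k : ℕ) - 1, by have := k.isLt; omega⟩

/-- One step of the water flow, given Alice's connections `a` on `A∘ = {0,...,s}`
and Bob's connections `b` on `B = {1,...,s}` (indexed by pipes `Fin s`). -/
def ghStep {s : ℕ} (a : Fin (s + 1) → Option (Fin (s + 1)))
    (b : Fin s → Option (Fin s)) : GHState s → GHState s
  | GHState.atAlice i =>
    match a i.succ with
    | none => GHState.exitA
    | some k =>
      match toPipe k with
      | none => GHState.exitA
      | some p => GHState.atBob p
  | GHState.atBob i =>
    match b i with
    | none => GHState.exitB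
    | some j => GHState.atAlice j
  | GHState.exitA => GHState.exitA
  | GHState.exitB => GHState.exitB

/-- The start of the water flow: the tap (vertex `0` of `A∘`) is connected by
Alice to at most one pipe. -/
def ghStart {s : ℕ} (a : Fin (s + 1) → Option (Fin (s + 1))) : GHState s :=
  match a 0 with
  | none => GHState.exitA
  | some k =>
    match toPipe k with
    | none => GHState.exitA
    | some p => GHState.atBob p

/-- The endpoint of the maximal path `π(x,y)` starting at the tap: since the graph
has maximum degree `2` and the path is simple, it is reached after at most
`2s + 2` steps. -/
def ghResult {s : ℕ} (a : Fin (s + 1) → Option (Fin (s + 1)))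
    (b : Fin s → Option (Fin s)) : GHState s :=
  (ghStep a b)^[2 * s + 2] (ghStart a)

/-- A garden-hose game of size `s` on inputs `{0,1}^n × {0,1}^n`: for every input
`x` Alice chooses a partial matching `EA x` on `A∘ = {0,1,…,s}` and for every
input `y` Bob chooses a partial matching `EB y` on `B = {1,…,s}`. -/
structure GHGame (n s : ℕ) where
  EA : (Fin n → Bool) → Fin (s + 1) → Option (Fin (s + 1))
  EB : (Fin n → Bool) → Fin s → Option (Fin s)
  matchA : ∀ x, IsPartialMatching (EA x)
  matchB : ∀ y, IsPartialMatching (EB y)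

/-- Where the water exits on input `(x, y)`. -/
def GHGame.run {n s : ℕ} (G : GHGame n s) (x y : Fin n → Bool) : GHState s :=
  ghResult (G.EA x) (G.EB y)

/-- The game `G` computes `f` if for all inputs the maximal path from the tap ends
in `A∘` whenever `f x y = 0` (water exits on Alice's side) and in `B` whenever
`f x y = 1` (water exits on Bob's side). -/
def GHGame.Computes {n s : ℕ} (G : GHGame n s)
    (f : (Fin n → Bool) → (Fin n → Bool) → Bool) : Prop :=
  ∀ x y, G.run x y = if f x y then GHState.exitB else GHState.exitA

/-- The garden-hose complexity of `f`: the minimal number of pipes of a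
garden-hose game computing `f`. -/
noncomputable def GH {n : ℕ} (f : (Fin n → Bool) → (Fin n → Bool) → Bool) : ℕ :=
  sInf {s : ℕ | ∃ G : GHGame n s, G.Computes f}

/-!
Alice connects the tap to the pipe indexed by her input `x`. Bob leaves open exactly the
pipes of those `x` with `f x y = 1` and pairs up all the other pipes among themselves; one
spare pipe, never used by Alice, makes the number of paired pipes even. So for `f x y = 1`
the water leaves at Bob's end of pipe `x`, and otherwise Bob sends it back through another
pipe, whose end on Alice's side is open.
-/

open Function Finset

section Matchings

variable {V : Type*} [DecidableEq V]

def pairMatching (i j : V) : V → Option V := fun v =>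
  if v = i then some j else if v = j then some i else none

theorem isPartialMatching_pairMatching {i j : V} (hij : i ≠ j) :
    IsPartialMatching (pairMatching i j) := by
  intro v w h
  unfold pairMatching at h ⊢
  split_ifs at h with hi hj <;> cases h <;> simp_all [eq_comm]

theorem exists_involutive_ne_self_of_even_card {α : Type*} [Fintype α]
    (h : Even (Fintype.card α)) : ∃ σ : α → α, Involutive σ ∧ ∀ a, σ a ≠ a := by
  obtain ⟨k, hk⟩ := h
  let e : α ≃ Bool × Fin k := Fintype.equivOfCardEq (by simp [hk, two_mul])
  refine ⟨e.symm ∘ Prod.map not id ∘ e, fun a => by simp [Prod.map], fun a ha => ?_⟩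
  have := congrArg (fun b => (e b).1) ha
  simp at this

theorem exists_isPartialMatching_of_even_card (T : Finset V) (hT : Even T.card) :
    ∃ m : V → Option V, IsPartialMatching m ∧ ∀ v, m v = none ↔ v ∉ T := by
  obtain ⟨σ, hσ, hne⟩ := exists_involutive_ne_self_of_even_card (α := T) (by simpa using hT)
  refine ⟨fun v => if h : v ∈ T then some (σ ⟨v, h⟩) else none, ?_, fun v => by
    dsimp only; split_ifs <;> simp_all⟩
  intro v w h
  dsimp only at h ⊢
  split_ifs at h with hv
  cases h
  refine ⟨fun he => hne _ (Subtype.ext he.symm), ?_⟩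
  simp [hσ _]

theorem exists_even_card_mem_iff_of_ne (Z : Finset V) (e : V) :
    ∃ T : Finset V, Even T.card ∧ ∀ v, v ≠ e → (v ∈ T ↔ v ∈ Z) := by
  by_cases hZ : Even Z.card
  · exact ⟨Z, hZ, fun _ _ => Iff.rfl⟩
  by_cases he : e ∈ Z
  · refine ⟨Z.erase e, ?_, fun v hv => by simp [hv]⟩
    have := card_erase_add_one he
    grind
  · refine ⟨insert e Z, ?_, fun v hv => by simp [hv]⟩
    rw [card_insert_of_notMem he]
    grind

theorem exists_isPartialMatching_none_iff_of_ne (Z : Finset V) (e : V) :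
    ∃ m : V → Option V, IsPartialMatching m ∧ ∀ v, v ≠ e → (m v = none ↔ v ∉ Z) := by
  obtain ⟨T, hT, hTZ⟩ := exists_even_card_mem_iff_of_ne Z e
  obtain ⟨m, hm, hmT⟩ := exists_isPartialMatching_of_even_card T hT
  exact ⟨m, hm, fun v hv => (hmT v).trans (hTZ v hv).not⟩

end Matchings

section Flow

variable {s : ℕ} {a : Fin (s + 1) → Option (Fin (s + 1))} {b : Fin s → Option (Fin s)}

theorem toPipe_succ (p : Fin s) : toPipe p.succ = some p := by
  simp [toPipe]

theorem ghStart_pairMatching_zero (p : Fin s) :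
    ghStart (pairMatching 0 p.succ) = GHState.atBob p := by
  simp [ghStart, pairMatching, toPipe_succ]

theorem ghStep_atBob_of_eq_none {p : Fin s} (h : b p = none) :
    ghStep a b (GHState.atBob p) = GHState.exitB := by
  simp [ghStep, h]

theorem ghStep_atBob_of_eq_some {p q : Fin s} (h : b p = some q) :
    ghStep a b (GHState.atBob p) = GHState.atAlice q := by
  simp [ghStep, h]

theorem ghStep_pairMatching_zero_atAlice {p q : Fin s} (hqp : q ≠ p) :
    ghStep (pairMatching 0 p.succ) b (GHState.atAlice q) = GHState.exitA := by
  simp [ghStep, pairMatching, Fin.succ_ne_zero, hqp]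

theorem ghResult_eq_of_iterate_eq {k : ℕ} (hk : k ≤ 2 * s + 2) {e : GHState s}
    (he : ghStep a b e = e) (h : (ghStep a b)^[k] (ghStart a) = e) : ghResult a b = e := by
  rw [ghResult, ← Nat.sub_add_cancel hk, iterate_add_apply, h, iterate_fixed he]

end Flow

theorem exists_ghGame_computes_of_injective {n s : ℕ}
    (f : (Fin n → Bool) → (Fin n → Bool) → Bool) (pipe : (Fin n → Bool) → Fin s)
    (hpipe : Injective pipe) (spare : Fin s) (hspare : ∀ x, pipe x ≠ spare) :
    ∃ G : GHGame n s, G.Computes f := by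
  choose bob hbob hopen using fun y =>
    exists_isPartialMatching_none_iff_of_ne ((univ.filter fun x => f x y = false).image pipe) spare
  refine ⟨⟨fun x => pairMatching 0 (pipe x).succ, bob,
    fun x => isPartialMatching_pairMatching (Fin.succ_ne_zero _).symm, hbob⟩, fun x y => ?_⟩
  have hopen_iff : bob y (pipe x) = none ↔ f x y = true := by
    simpa [hpipe.eq_iff] using hopen y (pipe x) (hspare x)
  refine ghResult_eq_of_iterate_eq (k := 2) (by omega) (by cases f x y <;> rfl) ?_
  show ghStep _ _ (ghStep _ _ (ghStart _)) = _
  rw [ghStart_pairMatching_zero]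
  cases hf : f x y
  · obtain ⟨q, hq⟩ := Option.ne_none_iff_exists'.1 (by simpa [hf] using hopen_iff.not)
    rw [ghStep_atBob_of_eq_some hq, ghStep_pairMatching_zero_atAlice (hbob y _ _ hq).1.symm]
    rfl
  · rw [ghStep_atBob_of_eq_none (hopen_iff.2 hf)]
    rfl

/-- For every Boolean function `f : {0,1}^n × {0,1}^n → {0,1}`, the garden-hose
complexity of `f` is at most `2^n + 1`: there is a garden-hose game with
`2^n + 1` pipes computing `f`. -/
theorem gh_le_two_pow_add_one (n : ℕ)
    (f : (Fin n → Bool) → (Fin n → Bool) → Bool) :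
    (∃ G : GHGame n (2 ^ n + 1), G.Computes f) ∧ GH f ≤ 2 ^ n + 1 := by
  let enc : (Fin n → Bool) ≃ Fin (2 ^ n) := Fintype.equivFinOfCardEq (by simp)
  have hG := exists_ghGame_computes_of_injective f (Fin.castSucc ∘ enc)
    ((Fin.castSucc_injective _).comp enc.injective) (Fin.last _)
    (fun _ => Fin.castSucc_ne_last _)
  exact ⟨hG, Nat.sInf_le hG⟩
end

section
/- Suppose f : {0,1}^n × {0,1}^n → {0,1} admits a deterministic alternating communication protocol of length D, i.e., a protocol in which Alice and Bob alternately send a single bit each (Alice sending first), every sent bit being a function of the sender's input and the transcript so far, such that after D bits the pair (x, transcript) determines f(x,y). Then the garden-hose complexity of f satisfies GH(f) ≤ 2^{D+1} − 1. -/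
/-- The transcript of the first `k` bits of a deterministic alternating
communication protocol in which Alice and Bob alternately send a single bit,
Alice sending first (i.e. on transcripts of even length); each sent bit is a
function of the sender's input and the transcript so far. -/
def transcript {n : ℕ} (A B : (Fin n → Bool) → List Bool → Bool)
    (x y : Fin n → Bool) : ℕ → List Bool
  | 0 => []
  | k + 1 =>
    let t := transcript A B x y k
    t ++ [if t.length % 2 = 0 then A x t else B y t]

/-!
Label the nodes of the protocol tree of depth `D` by the transcripts that lead to them; there are
`2 ^ (D + 1) - 1` of them. The root is the tap and every other node is a pipe. Alice joins each node
at which she speaks to the child her bit selects, and Bob does the same at his nodes, so the water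
runs down the transcript of `(x, y)`. Only the last connection needs care, since the water must
leave on Bob's side exactly when the output is `1`. If Alice sends the last bit, she knows the
output there and makes the final connection only when it is `1`; nobody uses the Bob ends at depth
`D`, so the water leaves on Bob's side. If Bob sends the last bit, Alice routes a leaf with output
`1` to a pipe whose Bob end is free: the sibling leaf when both leaves below the node give `1`, and
otherwise a detour through the subtree that her own last bit ruled out.
-/

open Function

section PartialMatching

variable {α β γ : Type*}

theorem IsPartialMatching.or {m₁ m₂ : α → Option α} (h₁ : IsPartialMatching m₁)
    (h₂ : IsPartialMatching m₂) (hdisj : ∀ v, m₁ v = none ∨ m₂ v = none) :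
    IsPartialMatching fun v => (m₁ v).or (m₂ v) := by
  intro v w hvw
  cases hv : m₁ v with
  | some w' =>
    obtain rfl : w' = w := by simpa [hv] using hvw
    obtain ⟨hne, hw⟩ := h₁ v w' hv
    exact ⟨hne, by simp [hw]⟩
  | none =>
    simp only [hv, Option.none_or] at hvw
    obtain ⟨hne, hw⟩ := h₂ v w hvw
    have hw₁ : m₁ w = none := (hdisj w).resolve_right (by simp [hw])
    exact ⟨hne, by simp [hw₁, hw]⟩

/-- The partial matching `m` on `α`, transported to `β` by identifying `v : α` with `i : β`
when `g v = e i`. -/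
noncomputable def relabel (g : α → γ) (e : β → γ) (m : α → Option α) (i : β) :
    Option β :=
  (partialInv g (e i)).bind fun v => (m v).bind fun w => partialInv e (g w)

variable {g : α → γ} {e : β → γ} {m : α → Option α}

theorem relabel_eq_some_iff (hg : Injective g) (he : Injective e) {i j : β} :
    relabel g e m i = some j ↔ ∃ v w, g v = e i ∧ m v = some w ∧ g w = e j := by
  simp only [relabel, Option.bind_eq_some_iff, hg.isPartialInv _ _, he.isPartialInv _ _]
  simp [eq_comm]

theorem relabel_of_eq (hg : Injective g) {v : α} {i : β} (hv : g v = e i) :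
    relabel g e m i = (m v).bind fun w => partialInv e (g w) := by
  simp [relabel, ← hv, partialInv_left hg]

theorem IsPartialMatching.relabel (hm : IsPartialMatching m) (hg : Injective g)
    (he : Injective e) : IsPartialMatching (relabel g e m) := by
  intro i j hij
  obtain ⟨v, w, hv, hvw, hw⟩ := (relabel_eq_some_iff hg he).1 hij
  obtain ⟨hne, hwv⟩ := hm v w hvw
  exact ⟨fun hij => hne (hg (by rw [hv, hw, hij])),
    (relabel_eq_some_iff hg he).2 ⟨w, v, hw, hwv, hv⟩⟩

end PartialMatching

/-! A node of the protocol tree is the transcript leading to it, most recent bit first; so the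
children of `v` are `false :: v` and `true :: v`. -/

section TreePartner

variable (c : List Bool → Bool) (keep : List Bool → Prop) [DecidablePred keep]

def treePartner (v : List Bool) : Option (List Bool) :=
  if keep v then some (c v :: v)
  else match v with
    | [] => none
    | d :: u => if keep u ∧ d = c u then some u else none

variable {c keep}

theorem treePartner_of_keep {v : List Bool} (h : keep v) :
    treePartner c keep v = some (c v :: v) :=
  if_pos h

theorem treePartner_eq_none {v : List Bool} (hv : ¬ keep v)
    (hup : ∀ d u, v = d :: u → keep u → d ≠ c u) : treePartner c keep v = none := by
  unfold treePartner
  rw [if_neg hv]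
  match v with
  | [] => rfl
  | d :: u => exact if_neg fun ⟨hu, hd⟩ => hup d u rfl hu hd

theorem isPartialMatching_treePartner (hc : ∀ v, keep v → ¬ keep (c v :: v)) :
    IsPartialMatching (treePartner c keep) := by
  intro v w hvw
  unfold treePartner at hvw
  split_ifs at hvw with hv
  · obtain rfl := Option.some.inj hvw
    refine ⟨fun h => by simpa using congrArg List.length h, ?_⟩
    simp [treePartner, hc v hv, hv]
  · match v, hvw with
    | d :: u, hvw =>
      simp only at hvw
      split_ifs at hvw with hu
      obtain rfl := Option.some.inj hvw
      refine ⟨fun h => by simpa using congrArg List.length h, ?_⟩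
      rw [treePartner_of_keep hu.1, hu.2]

end TreePartner

/-- Heap numbering of the tree, shifted so that the root gets `0`. Vertex `k` of `A∘` will be the
node of index `k`, and pipe `i` the node of index `i + 1`. -/
def nodeIndex : List Bool → ℕ
  | [] => 0
  | b :: v => 2 * nodeIndex v + 1 + b.toNat

theorem nodeIndex_injective : Injective nodeIndex := by
  intro v w h
  induction v generalizing w with
  | nil => cases w <;> simp [nodeIndex] at h ⊢; omega
  | cons b v ih =>
    cases w with
    | nil => simp [nodeIndex] at h
    | cons b' w =>
      simp only [nodeIndex] at h
      obtain rfl : b = b' := by cases b <;> cases b' <;> simp at h ⊢ <;> omega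
      rw [ih (by simpa using h)]

theorem nodeIndex_add_two_le (v : List Bool) : nodeIndex v + 2 ≤ 2 ^ (v.length + 1) := by
  induction v with
  | nil => simp [nodeIndex]
  | cons b v ih =>
    simp only [nodeIndex, List.length_cons, pow_succ] at ih ⊢
    cases b <;> simp <;> omega

def IsPipe (s : ℕ) (v : List Bool) : Prop := 0 < nodeIndex v ∧ nodeIndex v ≤ s

theorem IsPipe.lt_succ {s : ℕ} {v : List Bool} (h : IsPipe s v) : nodeIndex v < s + 1 :=
  Nat.lt_succ_of_le h.2

theorem IsPipe.sub_one_lt {s : ℕ} {v : List Bool} (h : IsPipe s v) : nodeIndex v - 1 < s := by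
  have := h.1; have := h.2; omega

theorem isPipe_cons {D : ℕ} {d : Bool} {u : List Bool} (hu : u.length < D) :
    IsPipe (2 ^ (D + 1) - 1) (d :: u) := by
  have hpow : 2 ^ ((d :: u).length + 1) ≤ 2 ^ (D + 1) :=
    Nat.pow_le_pow_right two_pos (by simpa using hu)
  have := nodeIndex_add_two_le (d :: u)
  exact ⟨by simp [nodeIndex], by omega⟩

section Flow

variable (s : ℕ) (P Q : List Bool → Option (List Bool))

noncomputable def aliceVertexPartner : Fin (s + 1) → Option (Fin (s + 1)) :=
  relabel nodeIndex Fin.val P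

noncomputable def bobVertexPartner : Fin s → Option (Fin s) :=
  relabel nodeIndex (fun i : Fin s => (i : ℕ) + 1) Q

/-- The water at Alice's end of the pipe `v`; the `exitA` branch is a junk value, never reached
when `IsPipe s v`. -/
def atAliceEnd (v : List Bool) : GHState s :=
  if h : nodeIndex v - 1 < s then .atAlice ⟨nodeIndex v - 1, h⟩ else .exitA

def atBobEnd (v : List Bool) : GHState s :=
  if h : nodeIndex v - 1 < s then .atBob ⟨nodeIndex v - 1, h⟩ else .exitB

structure IsWaterPath (p : ℕ → List Bool) (K : ℕ) : Prop where
  start : p 0 = []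
  isPipe : ∀ j, 0 < j → j ≤ K → IsPipe s (p j)
  step : ∀ j < K, (if j % 2 = 0 then P else Q) (p j) = some (p (j + 1))

variable {s P Q} {v w : List Bool}

theorem aliceVertexPartner_of_some {k : Fin (s + 1)} (hv : nodeIndex v = k) (hw : IsPipe s w)
    (h : P v = some w) : aliceVertexPartner s P k = some ⟨nodeIndex w, hw.lt_succ⟩ := by
  rw [aliceVertexPartner, relabel_of_eq nodeIndex_injective hv, h, Option.bind_some]
  exact partialInv_left Fin.val_injective (⟨nodeIndex w, _⟩ : Fin (s + 1))

theorem aliceVertexPartner_of_none {k : Fin (s + 1)} (hv : nodeIndex v = k) (h : P v = none) :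
    aliceVertexPartner s P k = none := by
  rw [aliceVertexPartner, relabel_of_eq nodeIndex_injective hv, h, Option.bind_none]

theorem bobVertexPartner_of_some {i : Fin s} (hv : nodeIndex v = i + 1) (hw : IsPipe s w)
    (h : Q v = some w) : bobVertexPartner s Q i = some ⟨nodeIndex w - 1, hw.sub_one_lt⟩ := by
  rw [bobVertexPartner, relabel_of_eq (e := fun i : Fin s => (i : ℕ) + 1) nodeIndex_injective hv,
    h, Option.bind_some]
  exact ((add_left_injective 1).comp Fin.val_injective).isPartialInv _ _ |>.2
    (by simp only [comp_apply]; have := hw.1; omega)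

theorem bobVertexPartner_of_none {i : Fin s} (hv : nodeIndex v = i + 1) (h : Q v = none) :
    bobVertexPartner s Q i = none := by
  rw [bobVertexPartner, relabel_of_eq (e := fun i : Fin s => (i : ℕ) + 1) nodeIndex_injective hv,
    h, Option.bind_none]

theorem toPipe_of_pos {k : ℕ} (hk : k < s + 1) (hpos : 0 < k) :
    toPipe (⟨k, hk⟩ : Fin (s + 1)) = some ⟨k - 1, by omega⟩ :=
  dif_neg hpos.ne'

theorem ghStart_of_some (hw : IsPipe s w) (h : P [] = some w) :
    ghStart (aliceVertexPartner s P) = atBobEnd s w := by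
  rw [ghStart, aliceVertexPartner_of_some rfl hw h, atBobEnd, dif_pos hw.sub_one_lt]
  simp only [toPipe_of_pos hw.lt_succ hw.1]

theorem ghStart_of_none (h : P [] = none) : ghStart (aliceVertexPartner s P) = .exitA := by
  rw [ghStart, aliceVertexPartner_of_none rfl h]

theorem ghStep_atAliceEnd_of_some (hv : IsPipe s v) (hw : IsPipe s w) (h : P v = some w) :
    ghStep (aliceVertexPartner s P) (bobVertexPartner s Q) (atAliceEnd s v) = atBobEnd s w := by
  rw [atAliceEnd, dif_pos hv.sub_one_lt, atBobEnd, dif_pos hw.sub_one_lt,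
    ghStep, aliceVertexPartner_of_some (by simp; have := hv.1; omega) hw h]
  simp only [toPipe_of_pos hw.lt_succ hw.1]

theorem ghStep_atAliceEnd_of_none (hv : IsPipe s v) (h : P v = none) :
    ghStep (aliceVertexPartner s P) (bobVertexPartner s Q) (atAliceEnd s v) = .exitA := by
  rw [atAliceEnd, dif_pos hv.sub_one_lt, ghStep,
    aliceVertexPartner_of_none (by simp; have := hv.1; omega) h]

theorem ghStep_atBobEnd_of_some (hv : IsPipe s v) (hw : IsPipe s w) (h : Q v = some w) :
    ghStep (aliceVertexPartner s P) (bobVertexPartner s Q) (atBobEnd s v) = atAliceEnd s w := by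
  rw [atBobEnd, dif_pos hv.sub_one_lt, atAliceEnd, dif_pos hw.sub_one_lt,
    ghStep, bobVertexPartner_of_some (by simp; have := hv.1; omega) hw h]

theorem ghStep_atBobEnd_of_none (hv : IsPipe s v) (h : Q v = none) :
    ghStep (aliceVertexPartner s P) (bobVertexPartner s Q) (atBobEnd s v) = .exitB := by
  rw [atBobEnd, dif_pos hv.sub_one_lt, ghStep,
    bobVertexPartner_of_none (by simp; have := hv.1; omega) h]

variable {p : ℕ → List Bool} {K : ℕ}

theorem IsWaterPath.iterate_ghStep (hp : IsWaterPath s P Q p K) {k : ℕ} (hk : k < K) :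
    (ghStep (aliceVertexPartner s P) (bobVertexPartner s Q))^[k]
        (ghStart (aliceVertexPartner s P)) =
      if k % 2 = 0 then atBobEnd s (p (k + 1)) else atAliceEnd s (p (k + 1)) := by
  induction k with
  | zero =>
    have h₁ := hp.step 0 hk
    rw [if_pos rfl, hp.start] at h₁
    exact ghStart_of_some (hp.isPipe 1 one_pos hk) h₁
  | succ k ih =>
    have hpipe₁ := hp.isPipe (k + 1) k.succ_pos (by omega)
    have hpipe₂ := hp.isPipe (k + 2) (by omega) hk
    have hstep := hp.step (k + 1) hk
    rw [iterate_succ_apply', ih (by omega)]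
    rcases Nat.mod_two_eq_zero_or_one k with hpar | hpar
    · rw [if_pos hpar, if_neg (by omega)]
      rw [if_neg (by omega)] at hstep
      exact ghStep_atBobEnd_of_some hpipe₁ hpipe₂ hstep
    · rw [if_neg (by omega), if_pos (by omega)]
      rw [if_pos (by omega)] at hstep
      exact ghStep_atAliceEnd_of_some hpipe₁ hpipe₂ hstep

theorem IsWaterPath.iterate_ghStep_eq_exitA (hp : IsWaterPath s P Q p K) (hK : K % 2 = 0)
    (hnone : P (p K) = none) :
    (ghStep (aliceVertexPartner s P) (bobVertexPartner s Q))^[K]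
      (ghStart (aliceVertexPartner s P)) = .exitA := by
  cases K with
  | zero => exact ghStart_of_none (hp.start ▸ hnone)
  | succ k =>
    rw [iterate_succ_apply', hp.iterate_ghStep (lt_add_one k), if_neg (by omega)]
    exact ghStep_atAliceEnd_of_none (hp.isPipe _ k.succ_pos le_rfl) hnone

theorem IsWaterPath.iterate_ghStep_eq_exitB (hp : IsWaterPath s P Q p K) (hK : K % 2 = 1)
    (hnone : Q (p K) = none) :
    (ghStep (aliceVertexPartner s P) (bobVertexPartner s Q))^[K]
      (ghStart (aliceVertexPartner s P)) = .exitB := by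
  obtain ⟨k, rfl⟩ : ∃ k, K = k + 1 := ⟨K - 1, by omega⟩
  rw [iterate_succ_apply', hp.iterate_ghStep (lt_add_one k), if_pos (by omega)]
  exact ghStep_atBobEnd_of_none (hp.isPipe _ k.succ_pos le_rfl) hnone

end Flow

theorem ghResult_eq_of_iterate {s N : ℕ} {a : Fin (s + 1) → Option (Fin (s + 1))}
    {b : Fin s → Option (Fin s)} {e : GHState s} (hN : N ≤ 2 * s + 2)
    (he : ghStep a b e = e) (h : (ghStep a b)^[N] (ghStart a) = e) : ghResult a b = e := by
  rw [ghResult, ← Nat.sub_add_cancel hN, iterate_add_apply, h, iterate_fixed he]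

theorem add_three_le_ghResult_steps (D : ℕ) : D + 3 ≤ 2 * (2 ^ (D + 1) - 1) + 2 := by
  have h := Nat.lt_two_pow_self (n := D + 2)
  rw [pow_succ] at h
  omega

section Protocol

variable (a b o : List Bool → Bool)

def protocolPath : ℕ → List Bool
  | 0 => []
  | k + 1 => (if k % 2 = 0 then a (protocolPath k) else b (protocolPath k)) :: protocolPath k

def sibling : List Bool → List Bool
  | [] => []
  | d :: u => (!d) :: u

def IsChosen (c : List Bool → Bool) (t : List Bool) : Prop := t = c t.tail :: t.tail

instance (c : List Bool → Bool) : DecidablePred (IsChosen c) :=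
  fun t => inferInstanceAs (Decidable (t = _))

def Mixed (t : List Bool) : Prop := o (true :: t) ≠ o (false :: t)

instance : DecidablePred (Mixed o) := fun _ => inferInstanceAs (Decidable (_ ≠ _))

def bobPartner (D : ℕ) : List Bool → Option (List Bool) :=
  treePartner b fun v => v.length % 2 = 1 ∧ v.length < D

/-- When `D` is odd, Alice's last edge leads to a leaf, whose Bob end is free, so she only draws it
when the output there is `1`. -/
def AliceExtends (D : ℕ) (v : List Bool) : Prop :=
  v.length % 2 = 0 ∧ v.length < D ∧ (v.length + 1 = D → o (a v :: v) = true)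

instance (D : ℕ) : DecidablePred (AliceExtends a o D) :=
  fun _ => inferInstanceAs (Decidable (_ ∧ _))

/-- Alice's edges among the leaves (depth `D`) and the nodes of depth `D - 1`, for even `D`.
Bob leaves free the Bob end of the leaf he does not choose. Below a node `t` of depth `D - 1`
that Alice's last bit selects, she joins the two leaves if both give output `1`; if exactly one
leaf gives `1`, she joins it to the sibling of `t`, which Bob connects to one of its own leaves,
and she joins these two leaves, so that the water leaves at the other one. -/
def gadgetPartner (D : ℕ) : List Bool → Option (List Bool)
  | [] => none
  | c :: t =>
    if t.length + 1 = D then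
      if IsChosen a t ∧ o (true :: t) = true ∧ o (false :: t) = true ∨
          ¬ IsChosen a t ∧ Mixed o (sibling t) then
        some ((!c) :: t)
      else if IsChosen a t ∧ Mixed o t ∧ c = o (true :: t) then some (sibling t)
      else none
    else if t.length + 2 = D ∧ ¬ IsChosen a (c :: t) ∧ Mixed o ((!c) :: t) then
      some (o (true :: (!c) :: t) :: (!c) :: t)
    else none

/-- For `D = 0` the tap is joined to the only pipe, `[false]`, when the output is `1`. -/
def alicePartner (D : ℕ) : List Bool → Option (List Bool) :=
  if D = 0 then treePartner (fun _ => false) fun v => v = [] ∧ o [] = true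
  else if D % 2 = 1 then treePartner a (AliceExtends a o D)
  else fun v => (treePartner a (AliceExtends a o D) v).or (gadgetPartner a o D v)

variable {a b o}

@[simp] theorem isChosen_cons {c : List Bool → Bool} {d : Bool} {u : List Bool} :
    IsChosen c (d :: u) ↔ d = c u := by
  simp [IsChosen]

theorem isChosen_not_cons {c : List Bool → Bool} {d : Bool} {u : List Bool} :
    IsChosen c ((!d) :: u) ↔ ¬ IsChosen c (d :: u) := by
  cases d <;> cases c u <;> simp

theorem Mixed.apply_eq_true_iff {t : List Bool} (h : Mixed o t) {c : Bool} :
    o (c :: t) = true ↔ c = o (true :: t) := by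
  unfold Mixed at h
  cases c <;> cases h₁ : o (true :: t) <;> cases h₂ : o (false :: t) <;> simp_all

theorem Mixed.not_both {t : List Bool} (h : Mixed o t) :
    ¬ (o (true :: t) = true ∧ o (false :: t) = true) :=
  fun ⟨h₁, h₂⟩ => h (h₁.trans h₂.symm)

section Gadget

variable {D : ℕ} {c : Bool} {t : List Bool}

theorem gadgetPartner_join (ht : t.length + 1 = D)
    (h : IsChosen a t ∧ o (true :: t) = true ∧ o (false :: t) = true ∨
      ¬ IsChosen a t ∧ Mixed o (sibling t)) :
    gadgetPartner a o D (c :: t) = some ((!c) :: t) := by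
  rw [gadgetPartner, if_pos ht, if_pos h]

theorem gadgetPartner_winner (ht : t.length + 1 = D) (hch : IsChosen a t) (hmix : Mixed o t)
    (hc : o (c :: t) = true) : gadgetPartner a o D (c :: t) = some (sibling t) := by
  rw [gadgetPartner, if_pos ht, if_neg (by have := hmix.not_both; tauto),
    if_pos ⟨hch, hmix, hmix.apply_eq_true_iff.1 hc⟩]

theorem gadgetPartner_loser (ht : t.length + 1 = D) (hch : IsChosen a t)
    (hc : o (c :: t) = false) : gadgetPartner a o D (c :: t) = none := by
  have hnot_both : ¬ (o (true :: t) = true ∧ o (false :: t) = true) := by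
    cases c <;> simp_all
  rw [gadgetPartner, if_pos ht, if_neg (by tauto), if_neg fun ⟨_, hmix, hwin⟩ => by
    simp [hmix.apply_eq_true_iff.2 hwin] at hc]

theorem gadgetPartner_dead (ht : t.length + 2 = D) (hdead : ¬ IsChosen a (c :: t))
    (hmix : Mixed o ((!c) :: t)) :
    gadgetPartner a o D (c :: t) = some (o (true :: (!c) :: t) :: (!c) :: t) := by
  rw [gadgetPartner, if_neg (by omega), if_pos ⟨ht, hdead, hmix⟩]

end Gadget

theorem isPartialMatching_gadgetPartner (D : ℕ) : IsPartialMatching (gadgetPartner a o D) := by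
  rintro (_ | ⟨c, t⟩) w h
  · simp [gadgetPartner] at h
  simp only [gadgetPartner] at h
  split_ifs at h with hD hjoin hwin hdead
  · obtain rfl := Option.some.inj h
    refine ⟨by simp, ?_⟩
    rw [gadgetPartner_join hD hjoin, Bool.not_not]
  · obtain rfl := Option.some.inj h
    obtain ⟨hch, hmix, rfl⟩ := hwin
    obtain ⟨d, u, rfl⟩ : ∃ d u, t = d :: u := ⟨_, _, hch⟩
    rw [isChosen_cons] at hch
    refine ⟨fun h => by simpa [sibling] using congrArg List.length h, ?_⟩
    rw [sibling, gadgetPartner_dead (by simpa using hD) (by simpa using hch) (by simpa using hmix),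
      Bool.not_not]
  · obtain rfl := Option.some.inj h
    obtain ⟨hD2, hdead, hmix⟩ := hdead
    refine ⟨fun h => by simpa using congrArg List.length h, ?_⟩
    rw [gadgetPartner_winner (by simpa using hD2) (isChosen_not_cons.2 hdead) hmix
      (hmix.apply_eq_true_iff.2 rfl), sibling, Bool.not_not]

theorem treePartner_or_gadgetPartner_eq_none {D : ℕ} (hD : D % 2 = 0) (v : List Bool) :
    treePartner a (AliceExtends a o D) v = none ∨ gadgetPartner a o D v = none := by
  rcases v with _ | ⟨c, t⟩
  · exact Or.inr rfl
  by_cases hlevel : t.length + 1 = D ∨ t.length + 2 = D ∧ ¬ IsChosen a (c :: t)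
  · refine Or.inl (treePartner_eq_none (fun h => by simp [AliceExtends] at h; omega) ?_)
    rintro _ _ ⟨rfl, rfl⟩ hkeep rfl
    simp [AliceExtends] at hkeep hlevel
    omega
  · refine Or.inr ?_
    rw [gadgetPartner, if_neg (by tauto), if_neg (by tauto)]

theorem isPartialMatching_alicePartner (D : ℕ) : IsPartialMatching (alicePartner a o D) := by
  have hextends : ∀ v, AliceExtends a o D v → ¬ AliceExtends a o D (a v :: v) :=
    fun v hv hv' => by simp [AliceExtends] at hv hv'; omega
  unfold alicePartner
  split_ifs with h0 hodd
  · exact isPartialMatching_treePartner (by simp)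
  · exact isPartialMatching_treePartner hextends
  · exact (isPartialMatching_treePartner hextends).or (isPartialMatching_gadgetPartner D)
      (treePartner_or_gadgetPartner_eq_none (by omega))

theorem isPartialMatching_bobPartner (D : ℕ) : IsPartialMatching (bobPartner b D) :=
  isPartialMatching_treePartner fun v hv hv' => by simp at hv'; omega

end Protocol

section Correctness

variable {a b o : List Bool → Bool} {D : ℕ}

theorem length_protocolPath (k : ℕ) : (protocolPath a b k).length = k := by
  induction k with
  | zero => rfl
  | succ k ih => simp [protocolPath, ih]

theorem protocolPath_succ_of_even {k : ℕ} (hk : k % 2 = 0) :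
    protocolPath a b (k + 1) = a (protocolPath a b k) :: protocolPath a b k := by
  rw [protocolPath, if_pos hk]

theorem protocolPath_succ_of_odd {k : ℕ} (hk : k % 2 = 1) :
    protocolPath a b (k + 1) = b (protocolPath a b k) :: protocolPath a b k := by
  rw [protocolPath, if_neg (by omega)]

theorem alicePartner_of_extends {v : List Bool} (hD : D ≠ 0) (h : AliceExtends a o D v) :
    alicePartner a o D v = some (a v :: v) := by
  rw [alicePartner, if_neg hD]
  split_ifs <;> simp [treePartner_of_keep h]

theorem alicePartner_eq_none_of_odd {v : List Bool} (hD : D % 2 = 1) (hv : v.length + 1 = D)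
    (hout : o (a v :: v) = false) : alicePartner a o D v = none := by
  rw [alicePartner, if_neg (by omega), if_pos hD]
  refine treePartner_eq_none (fun h => by simp [h.2.2 hv] at hout) ?_
  rintro _ u rfl hu -
  simp [AliceExtends] at hu hv
  omega

theorem alicePartner_eq_gadgetPartner {v : List Bool} (hD : D % 2 = 0) (hD0 : D ≠ 0)
    (hv : v.length = D) : alicePartner a o D v = gadgetPartner a o D v := by
  rw [alicePartner, if_neg hD0, if_neg (by omega), treePartner_eq_none, Option.none_or]
  · simp [AliceExtends, hv]
  · rintro _ u rfl hu -
    simp [AliceExtends] at hu hv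
    omega

theorem bobPartner_cons_eq_none {d : Bool} {u : List Bool} (hD : D ≤ u.length + 1)
    (hd : u.length % 2 = 1 → d ≠ b u) : bobPartner b D (d :: u) = none :=
  treePartner_eq_none (by simp; omega) fun _ _ h hu => by
    obtain ⟨rfl, rfl⟩ := List.cons_eq_cons.1 h
    exact hd hu.1

theorem isWaterPath_protocolPath (hD0 : D ≠ 0) {K : ℕ} (hK : K ≤ D)
    (hlast : K = D → D % 2 = 1 → o (protocolPath a b D) = true) :
    IsWaterPath (2 ^ (D + 1) - 1) (alicePartner a o D) (bobPartner b D) (protocolPath a b) K where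
  start := rfl
  isPipe j hj hjK := by
    obtain ⟨k, rfl⟩ : ∃ k, j = k + 1 := ⟨j - 1, by omega⟩
    exact isPipe_cons (by rw [length_protocolPath]; omega)
  step j hj := by
    split_ifs with hpar
    · rw [protocolPath_succ_of_even hpar]
      refine alicePartner_of_extends hD0 ⟨by rwa [length_protocolPath], by
        rw [length_protocolPath]; omega, fun h => ?_⟩
      rw [length_protocolPath] at h
      rw [← protocolPath_succ_of_even hpar, h]
      exact hlast (by omega) (by omega)
    · rw [protocolPath_succ_of_odd (by omega)]
      exact treePartner_of_keep ⟨by rw [length_protocolPath]; omega, by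
        rw [length_protocolPath]; omega⟩

theorem ghResult_protocol_of_zero :
    ghResult (aliceVertexPartner (2 ^ (0 + 1) - 1) (alicePartner a o 0))
        (bobVertexPartner (2 ^ (0 + 1) - 1) (bobPartner b 0)) =
      if o (protocolPath a b 0) then .exitB else .exitA := by
  have hpipe : IsPipe (2 ^ (0 + 1) - 1) [false] := by simp [IsPipe, nodeIndex]
  rw [protocolPath]
  cases hout : o []
  · refine ghResult_eq_of_iterate (N := 0) (Nat.zero_le _) rfl (ghStart_of_none ?_)
    rw [alicePartner, if_pos rfl]
    exact treePartner_eq_none (by simp [hout]) (by simp)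
  · refine ghResult_eq_of_iterate (N := 1) (by omega) rfl ?_
    rw [iterate_one, ghStart_of_some hpipe (by
      rw [alicePartner, if_pos rfl]; exact treePartner_of_keep ⟨rfl, hout⟩)]
    exact ghStep_atBobEnd_of_none hpipe (bobPartner_cons_eq_none (by simp) (by simp))

theorem ghResult_protocol_of_odd (hD : D % 2 = 1) :
    ghResult (aliceVertexPartner (2 ^ (D + 1) - 1) (alicePartner a o D))
        (bobVertexPartner (2 ^ (D + 1) - 1) (bobPartner b D)) =
      if o (protocolPath a b D) then .exitB else .exitA := by
  have hN := add_three_le_ghResult_steps D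
  obtain ⟨k, rfl⟩ : ∃ k, D = k + 1 := ⟨D - 1, by omega⟩
  rw [protocolPath_succ_of_even (by omega)]
  cases hout : o (a (protocolPath a b k) :: protocolPath a b k)
  · refine ghResult_eq_of_iterate (N := k) (by omega) rfl ?_
    refine (isWaterPath_protocolPath k.succ_ne_zero (by omega) (by omega)).iterate_ghStep_eq_exitA
      (by omega) ?_
    exact alicePartner_eq_none_of_odd hD (by rw [length_protocolPath]) hout
  · refine ghResult_eq_of_iterate (N := k + 1) (by omega) rfl ?_
    refine (isWaterPath_protocolPath k.succ_ne_zero le_rfl fun _ _ => ?_).iterate_ghStep_eq_exitB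
      hD ?_
    · rwa [protocolPath_succ_of_even (by omega)]
    · rw [protocolPath_succ_of_even (by omega)]
      exact bobPartner_cons_eq_none (by rw [length_protocolPath])
        (by rw [length_protocolPath]; omega)

theorem exists_iterate_atAliceEnd_eq_exitB {k : ℕ} (hk : k % 2 = 0) {u : List Bool}
    (hu : u.length = k) (hout : o (b (a u :: u) :: a u :: u) = true) :
    ∃ N ≤ 4, (ghStep (aliceVertexPartner (2 ^ (k + 2 + 1) - 1) (alicePartner a o (k + 2)))
        (bobVertexPartner (2 ^ (k + 2 + 1) - 1) (bobPartner b (k + 2))))^[N]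
      (atAliceEnd _ (b (a u :: u) :: a u :: u)) = .exitB := by
  have hD : (k + 2) % 2 = 0 := by omega
  have hpipe : ∀ {d : Bool} {w : List Bool}, w.length < k + 2 →
      IsPipe (2 ^ (k + 2 + 1) - 1) (d :: w) := isPipe_cons
  set t := a u :: u
  have ht : t.length + 1 = k + 2 := by simp [t, hu]
  by_cases hboth : o (true :: t) = true ∧ o (false :: t) = true
  · have hA : alicePartner a o (k + 2) (b t :: t) = some ((!b t) :: t) := by
      rw [alicePartner_eq_gadgetPartner hD (by omega) (by simpa using ht)]
      exact gadgetPartner_join ht (Or.inl ⟨by simp [t], hboth⟩)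
    refine ⟨2, by omega, ?_⟩
    rw [iterate_succ_apply', iterate_one,
      ghStep_atAliceEnd_of_some (hpipe (by omega)) (hpipe (by omega)) hA]
    exact ghStep_atBobEnd_of_none (hpipe (by omega)) (bobPartner_cons_eq_none (by omega) (by simp))
  · have hmix : Mixed o t := fun h => hboth (by cases hc : b t <;> simp_all)
    set t' := (!a u) :: u
    have ht' : t'.length + 1 = k + 2 := by simp [t', hu]
    have hA₁ : alicePartner a o (k + 2) (b t :: t) = some t' := by
      rw [alicePartner_eq_gadgetPartner hD (by omega) (by simpa using ht)]
      exact gadgetPartner_winner ht (by simp [t]) hmix hout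
    have hB : bobPartner b (k + 2) t' = some (b t' :: t') :=
      treePartner_of_keep ⟨by simp [t', hu]; omega, by omega⟩
    have hA₂ : alicePartner a o (k + 2) (b t' :: t') = some ((!b t') :: t') := by
      rw [alicePartner_eq_gadgetPartner hD (by omega) (by simpa using ht')]
      exact gadgetPartner_join ht' (Or.inr ⟨by simp [t'], by simpa [t', sibling] using hmix⟩)
    refine ⟨4, le_rfl, ?_⟩
    rw [iterate_succ_apply', iterate_succ_apply', iterate_succ_apply', iterate_one,
      ghStep_atAliceEnd_of_some (hpipe (by omega)) (hpipe (by omega)) hA₁,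
      ghStep_atBobEnd_of_some (hpipe (by omega)) (hpipe (by omega)) hB,
      ghStep_atAliceEnd_of_some (hpipe (by omega)) (hpipe (by omega)) hA₂]
    exact ghStep_atBobEnd_of_none (hpipe (by omega)) (bobPartner_cons_eq_none (by omega) (by simp))

theorem ghResult_protocol_of_even (hD : D % 2 = 0) (hD0 : D ≠ 0) :
    ghResult (aliceVertexPartner (2 ^ (D + 1) - 1) (alicePartner a o D))
        (bobVertexPartner (2 ^ (D + 1) - 1) (bobPartner b D)) =
      if o (protocolPath a b D) then .exitB else .exitA := by
  have hN := add_three_le_ghResult_steps D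
  obtain ⟨k, rfl⟩ : ∃ k, D = k + 2 := ⟨D - 2, by omega⟩
  have hpath := isWaterPath_protocolPath (a := a) (b := b) (o := o) hD0 le_rfl (by omega)
  have hreach := hpath.iterate_ghStep (k := k + 1) (by omega)
  set u := protocolPath a b k
  have hu : u.length = k := length_protocolPath k
  have hm : protocolPath a b (k + 2) = b (a u :: u) :: a u :: u := by
    rw [protocolPath_succ_of_odd (by omega), protocolPath_succ_of_even (by omega)]
  rw [if_neg (by omega), hm] at hreach
  rw [hm]
  cases hout : o (b (a u :: u) :: a u :: u)
  · refine ghResult_eq_of_iterate (N := k + 2) (by omega) rfl ?_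
    refine hpath.iterate_ghStep_eq_exitA hD ?_
    rw [hm, alicePartner_eq_gadgetPartner hD hD0 (by simp [hu])]
    exact gadgetPartner_loser (by simp [hu]) (by simp) hout
  · obtain ⟨N, hN4, hexit⟩ :=
      exists_iterate_atAliceEnd_eq_exitB (by omega) hu hout
    refine ghResult_eq_of_iterate (N := N + (k + 1)) (by omega) rfl ?_
    rw [iterate_add_apply, hreach, hexit, if_pos rfl]

theorem ghResult_protocol (D : ℕ) (a b o : List Bool → Bool) :
    ghResult (aliceVertexPartner (2 ^ (D + 1) - 1) (alicePartner a o D))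
        (bobVertexPartner (2 ^ (D + 1) - 1) (bobPartner b D)) =
      if o (protocolPath a b D) then .exitB else .exitA := by
  rcases Nat.eq_zero_or_pos D with rfl | hD0
  · exact ghResult_protocol_of_zero
  rcases Nat.mod_two_eq_zero_or_one D with hD | hD
  · exact ghResult_protocol_of_even hD hD0.ne'
  · exact ghResult_protocol_of_odd hD

end Correctness

section Game

variable {n : ℕ} (A B out : (Fin n → Bool) → List Bool → Bool)

theorem transcript_eq_reverse_protocolPath (x y : Fin n → Bool) (k : ℕ) :
    transcript A B x y k =
      (protocolPath (fun v => A x v.reverse) (fun v => B y v.reverse) k).reverse := by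
  induction k with
  | zero => rfl
  | succ k ih =>
    rw [transcript, ih, protocolPath, List.reverse_cons, List.length_reverse, length_protocolPath]

noncomputable def protocolGame (D : ℕ) : GHGame n (2 ^ (D + 1) - 1) where
  EA x := aliceVertexPartner _ (alicePartner (fun v => A x v.reverse) (fun v => out x v.reverse) D)
  EB y := bobVertexPartner _ (bobPartner (fun v => B y v.reverse) D)
  matchA _ := (isPartialMatching_alicePartner D).relabel nodeIndex_injective Fin.val_injective
  matchB _ := (isPartialMatching_bobPartner D).relabel nodeIndex_injective
    ((add_left_injective 1).comp Fin.val_injective)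

theorem protocolGame_run (D : ℕ) (x y : Fin n → Bool) :
    (protocolGame A B out D).run x y =
      if out x (transcript A B x y D) then .exitB else .exitA := by
  rw [GHGame.run, protocolGame, ghResult_protocol, transcript_eq_reverse_protocolPath]

end Game

/-- If `f` admits a deterministic alternating communication protocol of length
`D` (Alice sending first, one bit per round, and after `D` bits the pair
`(x, transcript)` determines `f x y`), then `GH f ≤ 2 ^ (D + 1) - 1`. -/
theorem gh_le_of_alternating_protocol (n D : ℕ)
    (f : (Fin n → Bool) → (Fin n → Bool) → Bool)
    (A B out : (Fin n → Bool) → List Bool → Bool)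
    (h : ∀ x y, out x (transcript A B x y D) = f x y) :
    (∃ G : GHGame n (2 ^ (D + 1) - 1), G.Computes f) ∧
      GH f ≤ 2 ^ (D + 1) - 1 := by
  have hG : (protocolGame A B out D).Computes f := fun x y => by
    rw [protocolGame_run, h]
  exact ⟨⟨_, hG⟩, Nat.sInf_le ⟨_, hG⟩⟩
end

section
/- Let EQ : {0,1}^n × {0,1}^n → {0,1} be the equality function, EQ(x,y) = 1 if and only if x = y. Then s = GH(EQ) satisfies s · log₂(s) ≥ n; in particular GH(EQ) ∈ Ω(n / log n). -/
/-- The equality function: `EQ x y = 1` iff `x = y`. -/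
def EQfun (n : ℕ) (x y : Fin n → Bool) : Bool := decide (x = y)

namespace IsPartialMatching

variable {V W : Type*}

theorem conj {m : V → Option V} (hm : IsPartialMatching m) (e : W ≃ V) :
    IsPartialMatching fun w => (m (e w)).map e.symm := by
  intro i j h
  simp only [Option.map_eq_some_iff] at h
  obtain ⟨v, hv, rfl⟩ := h
  obtain ⟨hne, hback⟩ := hm _ _ hv
  refine ⟨fun h => hne (by rw [h, Equiv.apply_symm_apply]), ?_⟩
  simp [hback]

theorem card_le [Fintype V] :
    Nat.card {m : V → Option V // IsPartialMatching m} ≤ Nat.card V ^ Nat.card V := by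
  classical
  have hinj : Function.Injective fun m : {m : V → Option V // IsPartialMatching m} =>
      fun v => (⟨m.1 v, fun h => (m.2 v v h).1 rfl⟩ : {o : Option V // o ≠ some v}) :=
    fun m m' h => Subtype.ext <| funext fun v => congrArg Subtype.val (congrFun h v)
  calc _ ≤ Nat.card (∀ v : V, {o : Option V // o ≠ some v}) :=
        Nat.card_le_card_of_injective _ hinj
    _ = Nat.card V ^ Nat.card V := by simp [Nat.card_eq_fintype_card]

end IsPartialMatching

theorem isPartialMatching_edge {V : Type*} [DecidableEq V] {u v : V} (huv : u ≠ v) :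
    IsPartialMatching fun w => if w = u then some v else if w = v then some u else none := by
  intro i j h
  dsimp only at h ⊢
  split_ifs at h with hu hv <;> cases h <;> subst_vars <;> simp [huv, huv.symm]

theorem isPartialMatching_flipSnd {X : Type*} [DecidableEq X] (y : X) :
    IsPartialMatching fun p : X × Bool => if p.1 = y then none else some (p.1, !p.2) := by
  rintro ⟨x, c⟩ j h
  dsimp only at h ⊢
  split_ifs at h with hxy
  cases h
  simp [hxy]

section Flow

variable {s : ℕ} {a : Fin (s + 1) → Option (Fin (s + 1))} {b : Fin s → Option (Fin s)}

theorem ghStart_of_eq_succ {i : Fin s} (h : a 0 = some i.succ) : ghStart a = .atBob i := by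
  simp [ghStart, h, toPipe]

theorem ghResult_eq_exitB {i : Fin s} (hstart : ghStart a = .atBob i) (hi : b i = none) :
    ghResult a b = .exitB := by
  rw [ghResult, hstart, Function.iterate_succ_apply]
  simp only [ghStep, hi]
  exact Function.iterate_fixed rfl _

theorem ghResult_eq_exitA {i j : Fin s} (hstart : ghStart a = .atBob i) (hi : b i = some j)
    (hj : a j.succ = none) : ghResult a b = .exitA := by
  rw [ghResult, hstart, Function.iterate_succ_apply, Function.iterate_succ_apply]
  simp only [ghStep, hi, hj]
  exact Function.iterate_fixed rfl _

end Flow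

/-- Pipes are indexed by pairs `(z, c)`. Alice feeds the tap into pipe `(x, false)`; Bob links
`(z, false)` with `(z, true)` for every `z ≠ y`, so the water returns to Alice, at the open end
of `(x, true)`, exactly when `x ≠ y`. -/
noncomputable def eqGame (n : ℕ) : GHGame n (Fintype.card ((Fin n → Bool) × Bool)) :=
  let e := (Fintype.equivFin ((Fin n → Bool) × Bool)).symm
  let E := (finSuccEquiv _).trans e.optionCongr
  { EA := fun x k => ((fun w => if w = none then some (some (x, false))
      else if w = some (x, false) then some none else none) (E k)).map E.symm
    EB := fun y i => ((fun p => if p.1 = y then none else some (p.1, !p.2)) (e i)).map e.symm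
    matchA := fun _ => (isPartialMatching_edge (Option.some_ne_none _).symm).conj E
    matchB := fun y => (isPartialMatching_flipSnd y).conj e }

theorem eqGame_computes (n : ℕ) : (eqGame n).Computes (EQfun n) := by
  intro x y
  set e := (Fintype.equivFin ((Fin n → Bool) × Bool)).symm
  have hstart : ghStart ((eqGame n).EA x) = .atBob (e.symm (x, false)) :=
    ghStart_of_eq_succ (by simp [eqGame, e, ← Equiv.optionCongr_symm])
  rw [GHGame.run]
  by_cases hxy : x = y
  · subst hxy
    simpa [EQfun] using ghResult_eq_exitB hstart (by simp [eqGame, e, ← Equiv.optionCongr_symm])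
  · simpa [EQfun, hxy] using ghResult_eq_exitA hstart (j := e.symm (x, true))
      (by simp [eqGame, e, hxy]) (by simp [eqGame, e, ← Equiv.optionCongr_symm])

theorem GHGame.Computes.apply_eq_of_EB_eq {n s : ℕ} {G : GHGame n s}
    {f : (Fin n → Bool) → (Fin n → Bool) → Bool} (hG : G.Computes f) {y y' : Fin n → Bool}
    (h : G.EB y = G.EB y') (x : Fin n → Bool) : f x y = f x y' := by
  have hxy := hG x y
  rw [GHGame.run, h, ← GHGame.run, hG x y'] at hxy
  revert hxy
  cases f x y <;> cases f x y' <;> simp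

theorem GHGame.Computes.injective_EB_of_EQfun {n s : ℕ} {G : GHGame n s}
    (hG : G.Computes (EQfun n)) : Function.Injective G.EB := fun y y' h => by
  simpa [EQfun] using hG.apply_eq_of_EB_eq h y

theorem GHGame.Computes.two_pow_le_pow_self_of_EQfun {n s : ℕ} {G : GHGame n s}
    (hG : G.Computes (EQfun n)) : 2 ^ n ≤ s ^ s := by
  have hinj : Function.Injective fun y =>
      (⟨G.EB y, G.matchB y⟩ : {m : Fin s → Option (Fin s) // IsPartialMatching m}) :=
    fun y y' h => hG.injective_EB_of_EQfun (congrArg Subtype.val h)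
  simpa using (Nat.card_le_card_of_injective _ hinj).trans IsPartialMatching.card_le

theorem exists_game_GH {n s : ℕ} {f : (Fin n → Bool) → (Fin n → Bool) → Bool}
    {G : GHGame n s} (hG : G.Computes f) : ∃ G : GHGame n (GH f), G.Computes f :=
  Nat.sInf_mem (s := {s | ∃ G : GHGame n s, G.Computes f}) ⟨s, G, hG⟩

theorem le_mul_logb_of_two_pow_le_pow_self {n s : ℕ} (h : 2 ^ n ≤ s ^ s) :
    (n : ℝ) ≤ s * Real.logb 2 s := by
  rcases Nat.eq_zero_or_pos s with rfl | hs
  · have hn : n = 0 := by simpa using Nat.one_lt_two_pow_iff.not.mp h.not_gt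
    simp [hn]
  have hlog := Real.logb_le_logb_of_le one_lt_two (by positivity)
    (show (2 : ℝ) ^ n ≤ (s : ℝ) ^ s by exact_mod_cast h)
  rwa [Real.logb_pow, Real.logb_pow, Real.logb_self_eq_one one_lt_two, mul_one] at hlog

theorem div_logb_le_of_le_mul_logb {m s : ℝ} (hm : 2 ≤ m) (hs : 0 ≤ s)
    (h : m ≤ s * Real.logb 2 s) :
    m / Real.logb 2 m ≤ s := by
  have hlogm : 1 ≤ Real.logb 2 m := by
    rw [Real.le_logb_iff_rpow_le one_lt_two (by linarith)]; simpa using hm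
  rcases le_or_gt s m with hsm | hms
  · have hs_pos : 0 < s := hs.lt_of_ne (by rintro rfl; simp at h; linarith)
    rw [div_le_iff₀ (by linarith)]
    calc m ≤ s * Real.logb 2 s := h
      _ ≤ s * Real.logb 2 m := by gcongr; norm_num
  · exact (div_le_self (by linarith) hlogm).trans hms.le

/-- `s = GH(EQ)` satisfies `s · log₂ s ≥ n`; in particular
`GH(EQ) ∈ Ω(n / log n)`. -/
theorem gh_eq_lower_bound (n : ℕ) :
    (n : ℝ) ≤ (GH (EQfun n) : ℝ) * Real.logb 2 (GH (EQfun n)) ∧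
    ∃ C : ℝ, 0 < C ∧ ∀ m : ℕ, 2 ≤ m →
      C * ((m : ℝ) / Real.logb 2 m) ≤ (GH (EQfun m) : ℝ) := by
  have key (n : ℕ) : (n : ℝ) ≤ (GH (EQfun n) : ℝ) * Real.logb 2 (GH (EQfun n)) := by
    obtain ⟨G, hG⟩ := exists_game_GH (eqGame_computes n)
    exact le_mul_logb_of_two_pow_le_pow_self hG.two_pow_le_pow_self_of_EQfun
  refine ⟨key n, 1, one_pos, fun m hm => ?_⟩
  rw [one_mul]
  exact div_logb_le_of_le_mul_logb (by exact_mod_cast hm) (by positivity) (key m)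
end

section
/- The majority function MAJ : {0,1}^n × {0,1}^n → {0,1}, MAJ(x,y) = 1 if and only if Σ_i x_i y_i ≥ ⌈n/2⌉, can be computed in the garden-hose model with (n+2)² pipes: GH(MAJ) ≤ (n+2)². -/
/-- The majority function: `MAJ x y = 1` iff `Σ_i x_i y_i ≥ ⌈n/2⌉`. -/
def MAJfun (n : ℕ) (x y : Fin n → Bool) : Bool :=
  decide ((n + 1) / 2 ≤ (Finset.univ.filter fun i => x i = true ∧ y i = true).card)

/-! The water performs a left-to-right scan of the positions. A port of level `t` records how many
positions `i < t` have `x i = y i = 1`; the parties alternate, the one holding the water at level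
`t` adding the contribution of position `t` and sending it on to level `t + 1`. The holder learns
the sender's bit at `t` because the port's key is that bit xored with the holder's own bit at
`t - 1`; this keeps each party's routing injective, hence a matching, and since every pipe leads
one level up the water never turns back. Ports `(level, count, key)` with
`count ≤ level ≤ n` fit into `(n + 2)²` pipes. -/

namespace GardenHose

open Function

section Matching

variable {V W : Type*}

structure IsDirectedMatching (f : V → Option V) : Prop where
  injective : ∀ {u v w}, f u = some w → f v = some w → u = v
  eq_none_of_eq_some : ∀ {u v}, f u = some v → f v = none

open Classical in
noncomputable def undirect (f : V → Option V) (u : V) : Option V :=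
  if h : ∃ v, f v = some u then some h.choose else f u

variable {f : V → Option V} {u v : V}

lemma undirect_of_forall_ne (hin : ∀ v, f v ≠ some u) : undirect f u = f u := by
  rw [undirect, dif_neg (not_exists.2 hin)]

lemma IsDirectedMatching.ne (hf : IsDirectedMatching f) (h : f u = some v) : u ≠ v := by
  rintro rfl
  simp [hf.eq_none_of_eq_some h] at h

lemma undirect_of_eq_some (hf : IsDirectedMatching f) (h : f u = some v) :
    undirect f u = some v := by
  rw [undirect_of_forall_ne fun w hw => by simp [hf.eq_none_of_eq_some hw] at h, h]

lemma undirect_of_eq_some_rev (hf : IsDirectedMatching f) (h : f v = some u) :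
    undirect f u = some v := by
  have hin : ∃ w, f w = some u := ⟨v, h⟩
  rw [undirect, dif_pos hin, hf.injective hin.choose_spec h]

lemma IsDirectedMatching.isPartialMatching_undirect (hf : IsDirectedMatching f) :
    IsPartialMatching (undirect f) := by
  intro u v h
  by_cases hin : ∃ w, f w = some u
  · obtain ⟨w, hw⟩ := hin
    obtain rfl : w = v := Option.some_injective _ ((undirect_of_eq_some_rev hf hw).symm.trans h)
    exact ⟨(hf.ne hw).symm, undirect_of_eq_some hf hw⟩
  · rw [undirect, dif_neg hin] at h
    exact ⟨hf.ne h, undirect_of_eq_some_rev hf h⟩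

noncomputable def pushMatching (ι : V ↪ W) (m : V → Option V) (w : W) : Option W :=
  (partialInv ι w).bind fun v => (m v).map ι

lemma pushMatching_apply (ι : V ↪ W) (m : V → Option V) (v : V) :
    pushMatching ι m (ι v) = (m v).map ι := by
  rw [pushMatching, partialInv_left ι.injective, Option.bind_some]

lemma isPartialMatching_pushMatching {m : V → Option V} (hm : IsPartialMatching m)
    (ι : V ↪ W) :
    IsPartialMatching (pushMatching ι m) := by
  intro w w' h
  obtain ⟨v, hv, hw'⟩ := Option.bind_eq_some_iff.1 h
  obtain ⟨v', hv', rfl⟩ := Option.map_eq_some_iff.1 hw'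
  obtain rfl := (ι.injective.isPartialInv v w).1 hv
  obtain ⟨hne, hback⟩ := hm v v' hv'
  exact ⟨ι.injective.ne hne, by rw [pushMatching_apply, hback, Option.map_some]⟩

end Matching

def tapEmbedding {P : Type*} {s : ℕ} (e : P ↪ Fin s) : Option P ↪ Fin (s + 1) :=
  (e.trans (Fin.succEmb s)).optionElim 0 fun ⟨_, hp⟩ => Fin.succ_ne_zero _ hp

@[simp] lemma tapEmbedding_some {P : Type*} {s : ℕ} (e : P ↪ Fin s) (p : P) :
    tapEmbedding e (some p) = (e p).succ :=
  rfl

@[simp] lemma toPipe_succ {s : ℕ} (i : Fin s) : toPipe i.succ = some i := by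
  simp [toPipe]

/-- A one-way protocol on ports `P` arranged in levels. Alice opens the tap into the port
`start x` of level `0`; water in a port of even level is at Bob's end, otherwise at Alice's. The
party holding the water either sends it on to a port of the next level (`moveA`, `moveB`) or lets
it out on its own side (`none`). -/
structure LayeredProtocol (n : ℕ) (P : Type*) where
  level : P → ℕ
  start : (Fin n → Bool) → P
  moveA : (Fin n → Bool) → P → Option P
  moveB : (Fin n → Bool) → P → Option P
  level_start : ∀ x, level (start x) = 0
  moveA_spec : ∀ {x p q}, moveA x p = some q → ¬Even (level p) ∧ level q = level p + 1
  moveB_spec : ∀ {y p q}, moveB y p = some q → Even (level p) ∧ level q = level p + 1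
  moveA_injective : ∀ {x p q r}, moveA x p = some r → moveA x q = some r → p = q
  moveB_injective : ∀ {y p q r}, moveB y p = some r → moveB y q = some r → p = q

namespace LayeredProtocol

variable {n s : ℕ} {P : Type*} (π : LayeredProtocol n P) (e : P ↪ Fin s) (x y : Fin n → Bool)

def aliceForward : Option P → Option (Option P)
  | none => some (some (π.start x))
  | some p => (π.moveA x p).map some

def next (p : P) : Option P := if Even (π.level p) then π.moveB y p else π.moveA x p

def path : ℕ → Option P
  | 0 => some (π.start x)
  | i + 1 => (path i).bind (π.next x y)

def arrival (p : P) : GHState s := if Even (π.level p) then .atBob (e p) else .atAlice (e p)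

def exitOf (p : P) : GHState s := if Even (π.level p) then .exitB else .exitA

variable {π x y}

lemma even_level_start : Even (π.level (π.start x)) := by
  rw [π.level_start]
  exact Even.zero

lemma moveA_eq_none {p : P} (hp : Even (π.level p)) : π.moveA x p = none :=
  Option.eq_none_iff_forall_ne_some.2 fun _ hq => (π.moveA_spec hq).1 hp

lemma moveB_eq_none {p : P} (hp : ¬Even (π.level p)) : π.moveB y p = none :=
  Option.eq_none_iff_forall_ne_some.2 fun _ hq => hp (π.moveB_spec hq).1

lemma even_level_of_moveA {p q : P} (h : π.moveA x p = some q) : Even (π.level q) := by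
  obtain ⟨hp, hq⟩ := π.moveA_spec h
  rwa [hq, Nat.even_add_one]

lemma not_even_level_of_moveB {p q : P} (h : π.moveB y p = some q) : ¬Even (π.level q) := by
  obtain ⟨hp, hq⟩ := π.moveB_spec h
  rwa [hq, Nat.even_add_one, not_not]

lemma isDirectedMatching_moveB : IsDirectedMatching (π.moveB y) where
  injective := π.moveB_injective
  eq_none_of_eq_some h := moveB_eq_none (not_even_level_of_moveB h)

lemma isDirectedMatching_aliceForward : IsDirectedMatching (π.aliceForward x) where
  injective := by
    have start_ne {p} (h : π.moveA x p = some (π.start x)) : False := by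
      simpa [π.level_start] using (π.moveA_spec h).2
    rintro (_ | u) (_ | v) w hu hv <;> simp only [aliceForward, Option.map_eq_some_iff] at hu hv
    · rfl
    · obtain ⟨q, hq, rfl⟩ := hv
      cases Option.some_injective _ hu
      exact (start_ne hq).elim
    · obtain ⟨q, hq, rfl⟩ := hu
      cases Option.some_injective _ hv
      exact (start_ne hq).elim
    · obtain ⟨q, hu, rfl⟩ := hu
      obtain ⟨_, hv, hqq⟩ := hv
      cases Option.some_injective _ hqq
      rw [π.moveA_injective hu hv]
  eq_none_of_eq_some := by
    rintro (_ | u) v h <;> simp only [aliceForward, Option.map_eq_some_iff] at h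
    · cases h
      simp [aliceForward, moveA_eq_none even_level_start]
    · obtain ⟨q, hq, rfl⟩ := h
      simp [aliceForward, moveA_eq_none (even_level_of_moveA hq)]

noncomputable def toGame : GHGame n s where
  EA x := pushMatching (tapEmbedding e) (undirect (π.aliceForward x))
  EB y := pushMatching e (undirect (π.moveB y))
  matchA _ := isPartialMatching_pushMatching
    isDirectedMatching_aliceForward.isPartialMatching_undirect _
  matchB _ := isPartialMatching_pushMatching
    isDirectedMatching_moveB.isPartialMatching_undirect _

lemma toGame_EA_zero :
    (π.toGame e).EA x 0 = (undirect (π.aliceForward x) none).map (tapEmbedding e) :=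
  pushMatching_apply _ _ none

lemma toGame_EA_succ (p : P) :
    (π.toGame e).EA x (e p).succ = (undirect (π.aliceForward x) (some p)).map (tapEmbedding e) :=
  pushMatching_apply _ _ (some p)

lemma toGame_EB_apply (p : P) :
    (π.toGame e).EB y (e p) = (undirect (π.moveB y) p).map e :=
  pushMatching_apply _ _ p

lemma ghStart_toGame : ghStart ((π.toGame e).EA x) = π.arrival e (π.start x) := by
  have h0 := toGame_EA_zero (π := π) e (x := x)
  rw [undirect_of_forall_ne (by rintro (_ | _) h <;> simp [aliceForward] at h)] at h0
  simp [ghStart, h0, aliceForward, arrival, π.level_start]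

lemma ghStep_arrival (p : P) :
    ghStep ((π.toGame e).EA x) ((π.toGame e).EB y) (π.arrival e p) =
      (π.next x y p).elim (π.exitOf p) (π.arrival e) := by
  by_cases hp : Even (π.level p)
  · have hB := toGame_EB_apply (π := π) e (y := y) p
    rw [undirect_of_forall_ne fun v hv => not_even_level_of_moveB hv hp] at hB
    rcases hq : π.moveB y p with _ | q
    · simp [arrival, next, exitOf, hp, hB, hq, ghStep]
    · simp [arrival, next, hp, hB, hq, ghStep, not_even_level_of_moveB hq]
  · have hA := toGame_EA_succ (π := π) e (x := x) p
    rw [undirect_of_forall_ne ?_] at hA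
    · rcases hq : π.moveA x p with _ | q
      · simp [arrival, next, exitOf, hp, hA, hq, ghStep, aliceForward]
      · simp [arrival, next, hp, hA, hq, ghStep, aliceForward, even_level_of_moveA hq]
    · rintro (_ | v) hv <;> simp only [aliceForward, Option.map_eq_some_iff, Option.some_inj] at hv
      · exact hp (hv ▸ even_level_start)
      · obtain ⟨q, hq, rfl⟩ := hv
        exact hp (even_level_of_moveA hq)

lemma iterate_ghStep_of_path {i : ℕ} {p : P} (h : π.path x y i = some p) :
    (ghStep ((π.toGame e).EA x) ((π.toGame e).EB y))^[i] (ghStart ((π.toGame e).EA x)) =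
      π.arrival e p := by
  induction i generalizing p with
  | zero =>
    cases h
    exact ghStart_toGame e
  | succ i ih =>
    obtain ⟨q, hq, hp⟩ := Option.bind_eq_some_iff.1 h
    rw [iterate_succ_apply', ih hq, ghStep_arrival, hp]
    rfl

theorem run_toGame {m : ℕ} {p : P} (hp : π.path x y m = some p) (hstop : π.next x y p = none)
    (hm : m < 2 * s + 2) : (π.toGame e).run x y = π.exitOf p := by
  have hfix : ghStep ((π.toGame e).EA x) ((π.toGame e).EB y) (π.exitOf p) = π.exitOf p := by
    unfold exitOf
    split_ifs <;> rfl
  have hexit : (ghStep ((π.toGame e).EA x) ((π.toGame e).EB y))^[m + 1]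
      (ghStart ((π.toGame e).EA x)) = π.exitOf p := by
    rw [iterate_succ_apply', iterate_ghStep_of_path e hp, ghStep_arrival, hstop]
    rfl
  rw [GHGame.run, ghResult, ← Nat.sub_add_cancel (show m + 1 ≤ 2 * s + 2 by omega),
    iterate_add_apply, hexit, iterate_fixed hfix]

end LayeredProtocol

section Majority

variable {n : ℕ}

def bits (x : Fin n → Bool) (t : ℕ) : Bool := if h : t < n then x ⟨t, h⟩ else false

def prevBit (z : ℕ → Bool) : ℕ → Bool
  | 0 => false
  | t + 1 => z t

@[ext] structure MajPort (n : ℕ) where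
  level : ℕ
  count : ℕ
  key : Bool
  count_le : count ≤ level
  level_le : level ≤ n

def MajPort.sent (z : ℕ → Bool) (p : MajPort n) : Bool := p.key ^^ prevBit z p.level

def MajPort.nextCount (z : ℕ → Bool) (p : MajPort n) : ℕ :=
  p.count + (p.sent z && z p.level).toNat

/-- After the last bit the holder lets the water out if the answer is on its own side (`1` for
Bob), and otherwise passes it on to level `n`, where nobody moves it. -/
def majMove (bob : Bool) (z : ℕ → Bool) (p : MajPort n) : Option (MajPort n) :=
  if h : p.level < n ∧ (Even p.level ↔ bob = true) ∧
      ¬(p.level + 1 = n ∧ decide ((n + 1) / 2 ≤ p.nextCount z) = bob) then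
    some ⟨p.level + 1, p.nextCount z, z (p.level + 1) ^^ p.sent z,
      Nat.add_le_add p.count_le (Bool.toNat_le _), h.1⟩
  else none

variable {bob : Bool} {z : ℕ → Bool} {p q r : MajPort n}

lemma majMove_spec (h : majMove bob z p = some q) :
    (Even p.level ↔ bob = true) ∧ q.level = p.level + 1 := by
  unfold majMove at h
  split_ifs at h with hp
  cases h
  exact ⟨hp.2.1, rfl⟩

lemma majMove_injective (hp : majMove bob z p = some r) (hq : majMove bob z q = some r) :
    p = q := by
  unfold majMove at hp hq
  split_ifs at hp hq
  cases hp
  obtain ⟨hl, hc, hk⟩ := MajPort.mk.inj (Option.some_injective _ hq)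
  replace hl : q.level = p.level := by omega
  have hs : q.sent z = p.sent z := by rwa [hl, Bool.xor_right_inj] at hk
  have hkey : q.key = p.key := by rwa [MajPort.sent, MajPort.sent, hl, Bool.xor_left_inj] at hs
  ext
  · exact hl.symm
  · simp only [MajPort.nextCount, hs, hl] at hc
    omega
  · exact hkey.symm

lemma majMove_eq_none_of_le (h : n ≤ p.level) : majMove bob z p = none := by
  rw [majMove, dif_neg (by omega)]

variable (n) in
def majProtocol : LayeredProtocol n (MajPort n) where
  level := MajPort.level
  start x := ⟨0, 0, bits x 0, le_rfl, Nat.zero_le n⟩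
  moveA x := majMove false (bits x)
  moveB y := majMove true (bits y)
  level_start _ := rfl
  moveA_spec h := by simpa using majMove_spec h
  moveB_spec h := by simpa using majMove_spec h
  moveA_injective := majMove_injective
  moveB_injective := majMove_injective

/-- Ports with key `true` fill the triangle `count ≤ level` of the `(n + 2) × (n + 2)` grid,
those with key `false` the triangle above the diagonal. -/
def MajPort.toGrid (p : MajPort n) : Fin (n + 2) × Fin (n + 2) :=
  have := p.count_le
  have := p.level_le
  if p.key then (⟨p.level, by omega⟩, ⟨p.count, by omega⟩)
  else (⟨p.count, by omega⟩, ⟨p.level + 1, by omega⟩)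

lemma MajPort.toGrid_injective : Injective (MajPort.toGrid (n := n)) := by
  rintro ⟨l, c, _ | _, hc, _⟩ ⟨l', c', _ | _, hc', _⟩ h <;>
    simp [MajPort.toGrid, Prod.ext_iff, Fin.ext_iff] at h ⊢ <;> omega

variable (n) in
def majPortEmbedding : MajPort n ↪ Fin ((n + 2) ^ 2) :=
  .trans ⟨MajPort.toGrid, MajPort.toGrid_injective⟩
    (finProdFinEquiv.trans (finCongr (sq (n + 2)).symm)).toEmbedding

end Majority

section Trajectory

variable {n : ℕ} (x y : Fin n → Bool)

def sentBit (t : ℕ) : Bool := if Even t then bits x t else bits y t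

def commonCount (t : ℕ) : ℕ := ∑ i ∈ Finset.range t, (bits x i && bits y i).toNat

lemma commonCount_le (t : ℕ) : commonCount x y t ≤ t := by
  calc commonCount x y t ≤ (Finset.range t).card • 1 :=
        Finset.sum_le_card_nsmul _ _ 1 fun i _ => Bool.toNat_le _
    _ = t := by simp

lemma commonCount_succ (t : ℕ) :
    commonCount x y (t + 1) = commonCount x y t + (bits x t && bits y t).toNat :=
  Finset.sum_range_succ _ t

lemma commonCount_eq_card :
    commonCount x y n = (Finset.univ.filter fun i => x i = true ∧ y i = true).card := by
  rw [Finset.card_filter, commonCount, ← Fin.sum_univ_eq_sum_range]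
  refine Finset.sum_congr rfl fun i _ => ?_
  simp [bits, Bool.toNat]

def majPort (t : ℕ) (ht : t ≤ n) : MajPort n :=
  ⟨t, commonCount x y t, sentBit x y t ^^ prevBit (sentBit x y) t, commonCount_le x y t, ht⟩

variable {x y} {bob : Bool} {z : ℕ → Bool} {t : ℕ}

lemma majMove_majPort (ht : t < n) (hbob : Even t ↔ bob = true)
    (hprev : prevBit z t = prevBit (sentBit x y) t) (hnext : z (t + 1) = sentBit x y (t + 1))
    (hand : (sentBit x y t && z t) = (bits x t && bits y t)) :
    majMove bob z (majPort x y t ht.le) =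
      if t + 1 = n ∧ decide ((n + 1) / 2 ≤ commonCount x y (t + 1)) = bob then none
      else some (majPort x y (t + 1) ht) := by
  have hsent : (majPort x y t ht.le).sent z = sentBit x y t := by
    simp [MajPort.sent, majPort, hprev]
  have hcount : (majPort x y t ht.le).nextCount z = commonCount x y (t + 1) := by
    rw [MajPort.nextCount, hsent, commonCount_succ, ← hand]
    rfl
  by_cases hstop : t + 1 = n ∧ decide ((n + 1) / 2 ≤ commonCount x y (t + 1)) = bob
  · rw [if_pos hstop, majMove, dif_neg fun h => h.2.2 (hcount ▸ hstop)]
  · rw [if_neg hstop, majMove, dif_pos ⟨ht, hbob, hcount ▸ hstop⟩]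
    congr 1
    ext
    · rfl
    · exact hcount
    · change (z (t + 1) ^^ (majPort x y t ht.le).sent z) = _
      rw [hsent, hnext]
      rfl

lemma next_majPort (ht : t < n) :
    (majProtocol n).next x y (majPort x y t ht.le) =
      if t + 1 = n ∧ decide ((n + 1) / 2 ≤ commonCount x y (t + 1)) = decide (Even t) then none
      else some (majPort x y (t + 1) ht) := by
  change (if Even t then majMove true (bits y) _ else majMove false (bits x) _) = _
  by_cases he : Even t
  · rw [if_pos he, majMove_majPort ht (by simp [he])]
    · simp [he]
    · cases t with
      | zero => rfl
      | succ t => simp [prevBit, sentBit, Nat.even_add_one.1 he]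
    · simp [sentBit, Nat.even_add_one, he]
    · simp [sentBit, he]
  · rw [if_neg he, majMove_majPort ht (by simp [he])]
    · simp [he]
    · cases t with
      | zero => rfl
      | succ t => simp [prevBit, sentBit, not_not.1 (mt Nat.even_add_one.2 he)]
    · simp [sentBit, Nat.even_add_one, he]
    · simp [sentBit, he, Bool.and_comm]

lemma next_eq_none_of_le {p : MajPort n} (h : n ≤ p.level) :
    (majProtocol n).next x y p = none := by
  unfold LayeredProtocol.next
  split_ifs <;> exact majMove_eq_none_of_le h

lemma path_majPort (ht : t < n) : (majProtocol n).path x y t = some (majPort x y t ht.le) := by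
  induction t with
  | zero =>
    change some ((majProtocol n).start x) = _
    congr 1
    ext <;> simp [majProtocol, majPort, commonCount, sentBit, prevBit, bits]
  | succ t ih =>
    rw [LayeredProtocol.path, ih (by omega), Option.bind_some, next_majPort, if_neg (by omega)]

lemma MAJfun_eq_decide : MAJfun n x y = decide ((n + 1) / 2 ≤ commonCount x y n) := by
  rw [MAJfun, commonCount_eq_card]

lemma majProtocol_terminal : ∃ m ≤ n, ∃ p, (majProtocol n).path x y m = some p ∧
    (majProtocol n).next x y p = none ∧ (Even p.level ↔ MAJfun n x y = true) := by
  obtain _ | k := n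
  · exact ⟨0, le_rfl, _, rfl, next_eq_none_of_le le_rfl, by simp [majProtocol, MAJfun]⟩
  have hnext := next_majPort (x := x) (y := y) (Nat.lt_succ_self k)
  by_cases hstop : decide ((k + 1 + 1) / 2 ≤ commonCount x y (k + 1)) = decide (Even k)
  · refine ⟨k, k.le_succ, _, path_majPort (Nat.lt_succ_self k),
      by rw [hnext, if_pos ⟨rfl, hstop⟩], ?_⟩
    rw [MAJfun_eq_decide, hstop, decide_eq_true_iff]
    rfl
  · refine ⟨k + 1, le_rfl, majPort x y (k + 1) le_rfl, ?_, next_eq_none_of_le le_rfl, ?_⟩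
    · rw [LayeredProtocol.path, path_majPort (Nat.lt_succ_self k), Option.bind_some, hnext,
        if_neg fun h => hstop h.2]
    · rw [decide_eq_decide] at hstop
      rw [MAJfun_eq_decide, decide_eq_true_iff]
      change Even (k + 1) ↔ _
      rw [Nat.even_add_one]
      tauto

end Trajectory

noncomputable def majGame (n : ℕ) : GHGame n ((n + 2) ^ 2) :=
  (majProtocol n).toGame (majPortEmbedding n)

theorem majGame_computes (n : ℕ) : (majGame n).Computes (MAJfun n) := by
  intro x y
  obtain ⟨m, hm, p, hp, hstop, hside⟩ := majProtocol_terminal (x := x) (y := y)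
  have : n + 2 ≤ (n + 2) ^ 2 := Nat.le_self_pow two_ne_zero _
  rw [majGame, LayeredProtocol.run_toGame _ hp hstop (by omega)]
  exact if_congr hside rfl rfl

end GardenHose

/-- The majority function can be computed in the garden-hose model with
`(n + 2)²` pipes: `GH(MAJ) ≤ (n + 2)²`. -/
theorem gh_maj_upper_bound (n : ℕ) :
    (∃ G : GHGame n ((n + 2) ^ 2), G.Computes (MAJfun n)) ∧
      GH (MAJfun n) ≤ (n + 2) ^ 2 :=
  ⟨⟨_, GardenHose.majGame_computes n⟩, Nat.sInf_le ⟨_, GardenHose.majGame_computes n⟩⟩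
end
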